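/- Let s be an element of PGL(2,q) of order exactly q+1, and write s^i(x) = f_i(x)/g_i(x) for 1 ≤ i ≤ q+1 with f_i, g_i of degree at most 1. Then the product g_1(x)g_2(x)···g_{q+1}(x) is a nonzero scalar multiple of x^q − x, and likewise for the product of the f_i. -/
import Mathlib


open Matrix Polynomial
open scoped LinearAlgebra.Projectivization MatrixGroups Pointwise

namespace PaperPGL

section Defs

variable (F : Type*) [Field F]

lemma glInj (g : GL (Fin 2) F) :
    Function.Injective ((g : Matrix (Fin 2) (Fin 2) F).mulVecLin) := by
  intro x y h
  have h2 := congrArg ((↑g⁻¹ : Matrix (Fin 2) (Fin 2) F).mulVecLin) h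
  simp only [Matrix.mulVecLin_apply, Matrix.mulVec_mulVec] at h2
  rw [← Matrix.GeneralLinearGroup.coe_mul, inv_mul_cancel] at h2
  simpa using h2

noncomputable instance : MulAction (GL (Fin 2) F) (ℙ F (Fin 2 → F)) where
  smul g x := Projectivization.map ((g : Matrix (Fin 2) (Fin 2) F).mulVecLin) (glInj F g) x
  one_smul x := by
    show Projectivization.map _ _ x = x
    have h1 : ((1 : GL (Fin 2) F) : Matrix (Fin 2) (Fin 2) F).mulVecLin
        = (LinearMap.id : (Fin 2 → F) →ₗ[F] (Fin 2 → F)) := by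
      rw [Matrix.GeneralLinearGroup.coe_one, Matrix.mulVecLin_one]
    simp only [h1]
    rw [Projectivization.map_id]
    rfl
  mul_smul g h x := by
    show Projectivization.map _ _ x = Projectivization.map _ _ (Projectivization.map _ _ x)
    have h1 : ((g * h : GL (Fin 2) F) : Matrix (Fin 2) (Fin 2) F).mulVecLin
        = ((g : Matrix (Fin 2) (Fin 2) F).mulVecLin).comp
          ((h : Matrix (Fin 2) (Fin 2) F).mulVecLin) := by
      rw [← Matrix.mulVecLin_mul, ← Matrix.GeneralLinearGroup.coe_mul]
    simp only [h1]
    rw [Projectivization.map_comp]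
    rfl

/-- The image of `GL(2,F)` in the permutations of the projective line: `PGL(2,F)`
acting faithfully on `ℙ¹(F)`. -/
noncomputable def toPGL : GL (Fin 2) F →* Equiv.Perm (ℙ F (Fin 2 → F)) :=
  MulAction.toPermHom _ _

/-- `PGL(2,F)` as a subgroup of the permutation group of the projective line `ℙ¹(F)`. -/
noncomputable def pgl : Subgroup (Equiv.Perm (ℙ F (Fin 2 → F))) :=
  (toPGL F).range

/-- Entrywise base change `GL(2,F) →* GL(2,K)` along a ring hom. -/
noncomputable def baseChange (F K : Type*) [Field F] [Field K] (phi : F →+* K) :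
    GL (Fin 2) F →* GL (Fin 2) K :=
  Units.map phi.mapMatrix.toMonoidHom

end Defs

section Aux

variable {Fq : Type*} [Field Fq]

lemma fin2_cases : ∀ r r' k : Fin 2, r ≠ r' → (k = r ∨ k = r') := by decide

lemma smul_cancel {a b : Fq} {w : Fin 2 → Fq} (hw : w ≠ 0) (h : a • w = b • w) : a = b := by
  have h2 : (a - b) • w = 0 := by rw [sub_smul, h, sub_self]
  rcases smul_eq_zero.mp h2 with h3 | h3
  · exact sub_eq_zero.mp h3
  · exact absurd h3 hw

lemma mulVec_apply (M : Matrix (Fin 2) (Fin 2) Fq) (v : Fin 2 → Fq) (i : Fin 2) :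
    (M *ᵥ v) i = M i 0 * v 0 + M i 1 * v 1 := by
  simp [Matrix.mulVec, dotProduct, Fin.sum_univ_two]

lemma sq_eq (A : Matrix (Fin 2) (Fin 2) Fq) :
    A * A = (A 0 0 + A 1 1) • A - (A 0 0 * A 1 1 - A 0 1 * A 1 0) • 1 := by
  ext i j
  fin_cases i <;> fin_cases j <;>
    simp [Matrix.mul_apply, Fin.sum_univ_two, Matrix.one_apply] <;> ring

lemma pow_mem_span (A : Matrix (Fin 2) (Fin 2) Fq) (k : ℕ) :
    ∃ x y : Fq, A ^ k = x • 1 + y • A := by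
  induction k with
  | zero => exact ⟨1, 0, by simp⟩
  | succ n ih =>
    obtain ⟨x, y, h⟩ := ih
    refine ⟨-(y * (A 0 0 * A 1 1 - A 0 1 * A 1 0)), x + y * (A 0 0 + A 1 1), ?_⟩
    rw [pow_succ, h, add_mul, Matrix.smul_mul, Matrix.smul_mul, one_mul, sq_eq A]
    module

lemma eig_pow {A : Matrix (Fin 2) (Fin 2) Fq} {w : Fin 2 → Fq} {α : Fq}
    (h : A *ᵥ w = α • w) : ∀ n : ℕ, A ^ n *ᵥ w = α ^ n • w := by
  intro n
  induction n with
  | zero => simp [Matrix.one_mulVec]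
  | succ n ih =>
    rw [pow_succ, ← Matrix.mulVec_mulVec, h, Matrix.mulVec_smul, ih, smul_smul, pow_succ]
    ring_nf

lemma row_ne (g : GL (Fin 2) Fq) (r : Fin 2) (h0 : (g : Matrix (Fin 2) (Fin 2) Fq) r 0 = 0) :
    (g : Matrix (Fin 2) (Fin 2) Fq) r 1 ≠ 0 := by
  intro h1
  have hdet : ((g : Matrix (Fin 2) (Fin 2) Fq)).det ≠ 0 :=
    ((Matrix.isUnit_iff_isUnit_det _).mp g.isUnit).ne_zero
  apply hdet
  rw [Matrix.det_fin_two]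
  fin_cases r <;> simp_all

lemma nilsq (a b c d α : Fq) (htr : a + d = α + α) (hdet2 : a * d - b * c = α * α) :
    (!![a,b;c,d] - α • 1) * (!![a,b;c,d] - α • 1) = 0 := by
  ext i j
  fin_cases i <;> fin_cases j <;>
    simp [Matrix.mul_apply, Fin.sum_univ_two, Matrix.one_apply] <;>
    first
    | linear_combination a * htr - hdet2
    | linear_combination d * htr - hdet2
    | linear_combination b * htr
    | linear_combination c * htr

lemma factor_zero (a b c d α : Fq) (hch : (a + d) * α - (a * d - b * c) = α * α) :
    (!![a,b;c,d] - (a + d - α) • 1) * (!![a,b;c,d] - α • 1) = 0 := by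
  ext i j
  fin_cases i <;> fin_cases j <;>
    simp [Matrix.mul_apply, Fin.sum_univ_two, Matrix.one_apply] <;>
    first
    | linear_combination hch
    | ring1

lemma mulVec_ne_zero (g : GL (Fin 2) Fq) {v : Fin 2 → Fq} (hv : v ≠ 0) :
    (g : Matrix (Fin 2) (Fin 2) Fq) *ᵥ v ≠ 0 := by
  intro h
  apply hv
  apply glInj Fq g
  simpa using h

lemma smul_mk (g : GL (Fin 2) Fq) (v : Fin 2 → Fq) (hv : v ≠ 0) :
    g • Projectivization.mk Fq v hv
      = Projectivization.mk Fq ((g : Matrix (Fin 2) (Fin 2) Fq) *ᵥ v) (mulVec_ne_zero g hv) := rfl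

lemma toPGL_apply (g : GL (Fin 2) Fq) (x : ℙ Fq (Fin 2 → Fq)) : toPGL Fq g x = g • x := rfl

lemma toPGL_eq_one_iff (g : GL (Fin 2) Fq) :
    toPGL Fq g = 1 ↔ ∃ c : Fq, c ≠ 0 ∧ (g : Matrix (Fin 2) (Fin 2) Fq) = c • 1 := by
  constructor
  · intro h
    have key : ∀ (v : Fin 2 → Fq) (hv : v ≠ 0), ∃ a : Fqˣ,
        (a : Fq) • v = (g : Matrix (Fin 2) (Fin 2) Fq) *ᵥ v := by
      intro v hv
      have h1 : toPGL Fq g (Projectivization.mk Fq v hv) = Projectivization.mk Fq v hv := by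
        rw [h]; rfl
      rw [toPGL_apply, smul_mk, Projectivization.mk_eq_mk_iff] at h1
      obtain ⟨a, ha⟩ := h1
      exact ⟨a, ha⟩
    have h10 : (![1,0] : Fin 2 → Fq) ≠ 0 := fun h => one_ne_zero (congrFun h 0)
    have h01 : (![0,1] : Fin 2 → Fq) ≠ 0 := fun h => one_ne_zero (congrFun h 1)
    have h11 : (![1,1] : Fin 2 → Fq) ≠ 0 := fun h => one_ne_zero (congrFun h 0)
    obtain ⟨a, ha⟩ := key _ h10
    obtain ⟨b, hb⟩ := key _ h01
    obtain ⟨c, hc⟩ := key _ h11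
    have ha0 := congrFun ha 0; have ha1 := congrFun ha 1
    have hb0 := congrFun hb 0; have hb1 := congrFun hb 1
    have hc0 := congrFun hc 0; have hc1 := congrFun hc 1
    simp [Matrix.mulVec, dotProduct, Fin.sum_univ_two] at ha0 ha1 hb0 hb1 hc0 hc1
    refine ⟨a, a.ne_zero, ?_⟩
    ext i j
    fin_cases i <;> fin_cases j
    · simp [Matrix.one_apply]; linear_combination -ha0
    · simp [Matrix.one_apply]; linear_combination -hb0
    · simp [Matrix.one_apply]; linear_combination -ha1
    · simp [Matrix.one_apply]; linear_combination hc0 - hc1 - ha0 + ha1 - hb0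
  · rintro ⟨c, hc, hg⟩
    ext x
    simp only [Equiv.Perm.coe_one, id_eq]
    induction x using Projectivization.ind with
    | h v hv =>
      rw [toPGL_apply, smul_mk, Projectivization.mk_eq_mk_iff']
      exact ⟨c, by rw [hg, Matrix.smul_mulVec, Matrix.one_mulVec]⟩

variable [Fintype Fq]

lemma not_scalar {q : ℕ} (m : GL (Fin 2) Fq) (hord : orderOf (toPGL Fq m) = q + 1)
    {k : ℕ} (hk1 : 1 ≤ k) (hk2 : k ≤ q) {c : Fq}
    (h : (m : Matrix (Fin 2) (Fin 2) Fq) ^ k = c • 1) : False := by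
  have hc : c ≠ 0 := by
    rintro rfl
    rw [zero_smul] at h
    have h10 : (![1,0] : Fin 2 → Fq) ≠ 0 := fun h => one_ne_zero (congrFun h 0)
    apply mulVec_ne_zero (m ^ k) h10
    show (m : Matrix (Fin 2) (Fin 2) Fq) ^ k *ᵥ ![1,0] = 0
    rw [h, Matrix.zero_mulVec]
  have h1 : toPGL Fq (m ^ k) = 1 := (toPGL_eq_one_iff (m ^ k)).mpr ⟨c, hc, h⟩
  rw [map_pow] at h1
  have h2 : q + 1 ∣ k := hord ▸ orderOf_dvd_iff_pow_eq_one.mpr h1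
  have := Nat.le_of_dvd (by omega) h2
  omega

lemma no_eigen {q : ℕ} (m : GL (Fin 2) Fq) (hq : Fintype.card Fq = q)
    (hord : orderOf (toPGL Fq m) = q + 1) :
    ¬ ∃ (α : Fq) (w : Fin 2 → Fq), w ≠ 0 ∧ (m : Matrix (Fin 2) (Fin 2) Fq) *ᵥ w = α • w := by
  rintro ⟨α, w, hw, heig⟩
  set A := (m : Matrix (Fin 2) (Fin 2) Fq) with hA
  have hq2 : 2 ≤ q := hq ▸ Fintype.one_lt_card
  have hα : α ≠ 0 := by
    rintro rfl
    rw [zero_smul] at heig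
    exact mulVec_ne_zero m hw heig
  -- the characteristic polynomial relation
  have hA2w : (A * A) *ᵥ w = (α * α) • w := by
    rw [← Matrix.mulVec_mulVec, heig, Matrix.mulVec_smul, heig, smul_smul]
  have hch : (A 0 0 + A 1 1) * α - (A 0 0 * A 1 1 - A 0 1 * A 1 0) = α * α := by
    apply smul_cancel hw
    rw [sub_smul, ← hA2w, sq_eq A, Matrix.sub_mulVec, Matrix.smul_mulVec,
      Matrix.smul_mulVec, Matrix.one_mulVec, heig, smul_smul]
  by_cases hαγ : α = (A 0 0 + A 1 1) - α
  · -- repeated eigenvalue : m^p is scalar for the characteristic p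
    have htr : A 0 0 + A 1 1 = α + α := by linear_combination -hαγ
    have hdet2 : A 0 0 * A 1 1 - A 0 1 * A 1 0 = α * α := by
      linear_combination α * htr - hch
    have hN2 : (A - α • 1) * (A - α • 1) = 0 := by
      have h := nilsq (A 0 0) (A 0 1) (A 1 0) (A 1 1) α htr hdet2
      rwa [← Matrix.eta_fin_two A] at h
    obtain ⟨p, hchar⟩ := CharP.exists Fq
    haveI := hchar
    have hp : p.Prime := CharP.char_is_prime Fq p
    haveI := Fact.mk hp
    obtain ⟨n, hpn, hcard⟩ := FiniteField.card Fq p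
    have hpq : p ≤ q := by
      rw [← hq, hcard]
      exact Nat.le_self_pow (by exact_mod_cast n.ne_zero) p
    have hcomm : Commute (α • (1 : Matrix (Fin 2) (Fin 2) Fq)) (A - α • 1) :=
      (Commute.one_left (A - α • 1)).smul_left α
    have hMp : A ^ p = (α ^ p) • 1 := by
      have hA' : A = α • 1 + (A - α • 1) := by abel
      rw [hA', add_pow_char_of_commute _ hcomm, _root_.smul_pow, one_pow]
      have hNp : (A - α • 1) ^ p = 0 := by
        have h2 : p = 2 + (p - 2) := by
          have := hp.two_le; omega
        rw [h2, pow_add, pow_two, hN2, zero_mul]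
      rw [hNp, add_zero]
    exact not_scalar m hord hp.one_lt.le hpq hMp
  · -- two distinct eigenvalues : m^(q-1) is scalar
    have hA_ne : A ≠ α • 1 := by
      intro h
      have h1 : toPGL Fq m = 1 := (toPGL_eq_one_iff m).mpr ⟨α, hα, h⟩
      rw [h1, orderOf_one] at hord
      omega
    have hex : ∃ u : Fin 2 → Fq, (A - α • 1) *ᵥ u ≠ 0 := by
      by_contra hcon
      push_neg at hcon
      apply hA_ne
      apply sub_eq_zero.mp
      ext i j
      have h3 := congrFun (hcon (Pi.single j 1)) i
      simpa using h3
    obtain ⟨u, hu⟩ := hex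
    have hmul0 : (A - (A 0 0 + A 1 1 - α) • 1) * (A - α • 1) = 0 := by
      have h := factor_zero (A 0 0) (A 0 1) (A 1 0) (A 1 1) α hch
      rwa [← Matrix.eta_fin_two A] at h
    have heig' : A *ᵥ ((A - α • 1) *ᵥ u) = (A 0 0 + A 1 1 - α) • ((A - α • 1) *ᵥ u) := by
      have h0 : (A - (A 0 0 + A 1 1 - α) • 1) *ᵥ ((A - α • 1) *ᵥ u) = 0 := by
        rw [Matrix.mulVec_mulVec, hmul0, Matrix.zero_mulVec]
      rw [Matrix.sub_mulVec, Matrix.smul_mulVec, Matrix.one_mulVec, sub_eq_zero] at h0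
      exact h0
    have hγ : (A 0 0 + A 1 1 - α) ≠ 0 := by
      intro h0
      rw [h0, zero_smul] at heig'
      exact mulVec_ne_zero m hu heig'
    have hαq : α ^ (q - 1) = 1 := by
      have h := FiniteField.pow_card_sub_one_eq_one α hα
      rwa [hq] at h
    have hγq : (A 0 0 + A 1 1 - α) ^ (q - 1) = 1 := by
      have h := FiniteField.pow_card_sub_one_eq_one _ hγ
      rwa [hq] at h
    obtain ⟨x, y, hxy⟩ := pow_mem_span A (q - 1)
    have hw1 : A ^ (q - 1) *ᵥ w = w := by rw [eig_pow heig, hαq, one_smul]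
    have hw2 : A ^ (q - 1) *ᵥ ((A - α • 1) *ᵥ u) = (A - α • 1) *ᵥ u := by
      rw [eig_pow heig', hγq, one_smul]
    have expand : ∀ (z : Fin 2 → Fq) (β : Fq), A *ᵥ z = β • z →
        (x • 1 + y • A) *ᵥ z = (x + y * β) • z := by
      intro z β hz
      rw [Matrix.add_mulVec, Matrix.smul_mulVec, Matrix.smul_mulVec,
        Matrix.one_mulVec, hz, add_smul, smul_smul]
    have e1 : x + y * α = 1 := by
      apply smul_cancel hw
      rw [one_smul, ← expand w α heig, ← hxy]
      exact hw1
    have e2 : x + y * (A 0 0 + A 1 1 - α) = 1 := by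
      apply smul_cancel hu
      rw [one_smul, ← expand _ _ heig', ← hxy]
      exact hw2
    have hy : y = 0 := by
      have hne : α - (A 0 0 + A 1 1 - α) ≠ 0 := sub_ne_zero.mpr hαγ
      have h5 : y * (α - (A 0 0 + A 1 1 - α)) = 0 := by linear_combination e1 - e2
      rcases mul_eq_zero.mp h5 with h | h
      · exact h
      · exact absurd h hne
    have hfin : A ^ (q - 1) = x • 1 := by rw [hxy, hy, zero_smul, add_zero]
    exact not_scalar m hord (by omega) (by omega) hfin

lemma free {q : ℕ} (m : GL (Fin 2) Fq) (hq : Fintype.card Fq = q)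
    (hord : orderOf (toPGL Fq m) = q + 1)
    {k : ℕ} (hk1 : 1 ≤ k) (hk2 : k ≤ q) {v : Fin 2 → Fq} (hv : v ≠ 0) (t : Fq) :
    (m : Matrix (Fin 2) (Fin 2) Fq) ^ k *ᵥ v ≠ t • v := by
  intro h
  obtain ⟨x, y, hxy⟩ := pow_mem_span (m : Matrix (Fin 2) (Fin 2) Fq) k
  by_cases hy : y = 0
  · rw [hy, zero_smul, add_zero] at hxy
    exact not_scalar m hord hk1 hk2 hxy
  · apply no_eigen m hq hord
    refine ⟨y⁻¹ * (t - x), v, hv, ?_⟩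
    rw [hxy, Matrix.add_mulVec, Matrix.smul_mulVec, Matrix.smul_mulVec,
      Matrix.one_mulVec] at h
    have h3 : y • ((m : Matrix (Fin 2) (Fin 2) Fq) *ᵥ v) = (t - x) • v := by
      rw [sub_smul, ← h]; abel
    calc (m : Matrix (Fin 2) (Fin 2) Fq) *ᵥ v
        = (y⁻¹ * y) • ((m : Matrix (Fin 2) (Fin 2) Fq) *ᵥ v) := by
          rw [inv_mul_cancel₀ hy, one_smul]
      _ = y⁻¹ • ((t - x) • v) := by rw [← smul_smul, h3]
      _ = (y⁻¹ * (t - x)) • v := by rw [smul_smul]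

lemma core {q : ℕ} (m : GL (Fin 2) Fq) (hq : Fintype.card Fq = q)
    (hord : orderOf (toPGL Fq m) = q + 1)
    {i j : ℕ} (hi : 1 ≤ i) (hij : i < j) (hj : j ≤ q + 1)
    {v w : Fin 2 → Fq} (hv : v ≠ 0) {a b : Fq}
    (hia : (m : Matrix (Fin 2) (Fin 2) Fq) ^ i *ᵥ v = a • w)
    (hjb : (m : Matrix (Fin 2) (Fin 2) Fq) ^ j *ᵥ v = b • w) : False := by
  have hu : (m : Matrix (Fin 2) (Fin 2) Fq) ^ i *ᵥ v ≠ 0 := mulVec_ne_zero (m ^ i) hv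
  have ha : a ≠ 0 := by
    rintro rfl
    rw [zero_smul] at hia
    exact hu hia
  have key : (m : Matrix (Fin 2) (Fin 2) Fq) ^ (j - i) *ᵥ
      ((m : Matrix (Fin 2) (Fin 2) Fq) ^ i *ᵥ v)
      = (b * a⁻¹) • ((m : Matrix (Fin 2) (Fin 2) Fq) ^ i *ᵥ v) := by
    rw [Matrix.mulVec_mulVec, ← pow_add, Nat.sub_add_cancel hij.le, hjb, hia, smul_smul]
    congr 1
    field_simp
  exact free m hq hord (by omega) (by omega) hu (b * a⁻¹) key

lemma atmost_one {q : ℕ} (m : GL (Fin 2) Fq) (hq : Fintype.card Fq = q)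
    (hord : orderOf (toPGL Fq m) = q + 1)
    (r r' : Fin 2) (hrr : r ≠ r') {v : Fin 2 → Fq} (hv : v ≠ 0)
    {i j : ℕ} (hi : i ∈ Finset.Icc 1 (q + 1)) (hj : j ∈ Finset.Icc 1 (q + 1)) (hij : i ≠ j)
    (h1 : ((m : Matrix (Fin 2) (Fin 2) Fq) ^ i *ᵥ v) r = 0)
    (h2 : ((m : Matrix (Fin 2) (Fin 2) Fq) ^ j *ᵥ v) r = 0) : False := by
  rw [Finset.mem_Icc] at hi hj
  have form : ∀ k : ℕ, ((m : Matrix (Fin 2) (Fin 2) Fq) ^ k *ᵥ v) r = 0 →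
      (m : Matrix (Fin 2) (Fin 2) Fq) ^ k *ᵥ v
        = (((m : Matrix (Fin 2) (Fin 2) Fq) ^ k *ᵥ v) r') • (Pi.single r' 1 : Fin 2 → Fq) := by
    intro k hk
    ext s
    rcases fin2_cases r r' s hrr with rfl | rfl
    · simp [hk, Pi.single_eq_of_ne hrr]
    · simp
  rcases lt_or_gt_of_ne hij with h | h
  · exact core m hq hord hi.1 h hj.2 hv (form i h1) (form j h2)
  · exact core m hq hord hj.1 h hi.2 hv (form j h2) (form i h1)

lemma prod_X_sub_C_univ : ∏ x : Fq, (X - C x) = X ^ (Fintype.card Fq) - X := by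
  have h1 := FiniteField.roots_X_pow_card_sub_X Fq
  have hm : (X ^ (Fintype.card Fq) - X : Fq[X]).Monic := by
    apply Polynomial.Monic.sub_of_left (monic_X_pow _)
    rw [degree_X_pow, degree_X]
    exact_mod_cast Fintype.one_lt_card
  have h2 := Polynomial.prod_multiset_X_sub_C_of_monic_of_roots_card_eq hm ?_
  · rw [h1] at h2
    conv_rhs => rw [← h2]
    rw [Finset.prod_eq_multiset_prod]
  · rw [h1, FiniteField.X_pow_card_sub_X_natDegree_eq Fq Fintype.one_lt_card]
    simp

lemma row_prod {q : ℕ} (m : GL (Fin 2) Fq) (hq : Fintype.card Fq = q)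
    (hord : orderOf (toPGL Fq m) = q + 1) (r r' : Fin 2) (hrr : r ≠ r') :
    ∃ u : Fq, u ≠ 0 ∧ ∏ i ∈ Finset.Icc 1 (q + 1),
      (C ((m ^ i).val r 0) * X + C ((m ^ i).val r 1)) = C u * (X ^ q - X) := by
  classical
  have hIcard : (Finset.Icc 1 (q + 1)).card = q + 1 := by
    rw [Nat.card_Icc]
    omega
  set T := (Finset.Icc 1 (q + 1)).filter (fun i => (m ^ i).val r 0 = 0) with hT
  set S := (Finset.Icc 1 (q + 1)).filter (fun i => ¬ (m ^ i).val r 0 = 0) with hS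
  have h10 : (![1,0] : Fin 2 → Fq) ≠ 0 := fun h => one_ne_zero (congrFun h 0)
  have hTcard : T.card ≤ 1 := by
    rw [Finset.card_le_one]
    intro i hi j hj
    by_contra hij
    rw [hT, Finset.mem_filter] at hi hj
    apply atmost_one m hq hord r r' hrr h10 hi.1 hj.1 hij
    · rw [mulVec_apply]
      show (m ^ i).val r 0 * 1 + (m ^ i).val r 1 * 0 = 0
      rw [hi.2]; ring
    · rw [mulVec_apply]
      show (m ^ j).val r 0 * 1 + (m ^ j).val r 1 * 0 = 0
      rw [hj.2]; ring
  set ρ : ℕ → Fq := fun i => -((m ^ i).val r 1) * ((m ^ i).val r 0)⁻¹ with hρ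
  have hρroot : ∀ i ∈ S, (m ^ i).val r 0 * ρ i + (m ^ i).val r 1 = 0 := by
    intro i hi
    rw [hS, Finset.mem_filter] at hi
    have ha : ((m ^ i).val r 0) ≠ 0 := hi.2
    have hinv : (m ^ i).val r 0 * ((m ^ i).val r 0)⁻¹ = 1 := mul_inv_cancel₀ ha
    rw [hρ]
    linear_combination (-((m ^ i).val r 1)) * hinv
  have hinj : Set.InjOn ρ S := by
    intro i hi j hj hij'
    by_contra hij
    rw [Finset.mem_coe, hS, Finset.mem_filter] at hi hj
    have hvne : (![ρ i, 1] : Fin 2 → Fq) ≠ 0 := fun h => one_ne_zero (congrFun h 1)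
    apply atmost_one m hq hord r r' hrr hvne hi.1 hj.1 hij
    · rw [mulVec_apply]
      show (m ^ i).val r 0 * ρ i + (m ^ i).val r 1 * 1 = 0
      rw [mul_one]
      exact hρroot i (by rw [hS, Finset.mem_filter]; exact hi)
    · rw [mulVec_apply]
      show (m ^ j).val r 0 * ρ i + (m ^ j).val r 1 * 1 = 0
      rw [mul_one, hij']
      exact hρroot j (by rw [hS, Finset.mem_filter]; exact hj)
  have hScard : S.card ≤ q := by
    have h := Finset.card_le_card_of_injOn ρ (fun i _ => Finset.mem_univ (ρ i)) hinj
    rwa [Finset.card_univ, hq] at h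
  have hsum : T.card + S.card = q + 1 := by
    rw [hT, hS, Finset.card_filter_add_card_filter_not, hIcard]
  have hSq : S.card = q := by omega
  have himg : S.image ρ = Finset.univ := by
    apply Finset.eq_univ_of_card
    rw [Finset.card_image_of_injOn hinj, hSq, hq]
  have hsplit := Finset.prod_filter_mul_prod_filter_not (Finset.Icc 1 (q + 1))
    (fun i => (m ^ i).val r 0 = 0)
    (fun i => (C ((m ^ i).val r 0) * X + C ((m ^ i).val r 1)))
  have hTprod : ∏ i ∈ T, (C ((m ^ i).val r 0) * X + C ((m ^ i).val r 1))
      = C (∏ i ∈ T, (m ^ i).val r 1) := by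
    rw [map_prod]
    apply Finset.prod_congr rfl
    intro i hi
    rw [hT, Finset.mem_filter] at hi
    rw [hi.2]
    simp
  have hTne : (∏ i ∈ T, (m ^ i).val r 1) ≠ 0 := by
    rw [Finset.prod_ne_zero_iff]
    intro i hi
    rw [hT, Finset.mem_filter] at hi
    exact row_ne (m ^ i) r hi.2
  have hSne : (∏ i ∈ S, (m ^ i).val r 0) ≠ 0 := by
    rw [Finset.prod_ne_zero_iff]
    intro i hi
    rw [hS, Finset.mem_filter] at hi
    exact hi.2
  have hSprod : ∏ i ∈ S, (C ((m ^ i).val r 0) * X + C ((m ^ i).val r 1))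
      = C (∏ i ∈ S, (m ^ i).val r 0) * ∏ i ∈ S, (X - C (ρ i)) := by
    rw [map_prod, ← Finset.prod_mul_distrib]
    apply Finset.prod_congr rfl
    intro i hi
    have ha : (m ^ i).val r 0 ≠ 0 := (Finset.mem_filter.mp hi).2
    have hroot := hρroot i hi
    rw [mul_sub, ← C_mul,
      show (m ^ i).val r 0 * ρ i = -((m ^ i).val r 1) by linear_combination hroot,
      map_neg, sub_neg_eq_add]
  have hSroots : ∏ i ∈ S, (X - C (ρ i)) = X ^ q - X := by
    have h := prod_X_sub_C_univ (Fq := Fq)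
    rw [hq] at h
    rw [← h, ← himg, Finset.prod_image (fun x hx y hy hxy => hinj hx hy hxy)]
  refine ⟨(∏ i ∈ T, (m ^ i).val r 1) * (∏ i ∈ S, (m ^ i).val r 0),
    mul_ne_zero hTne hSne, ?_⟩
  calc ∏ i ∈ Finset.Icc 1 (q + 1), (C ((m ^ i).val r 0) * X + C ((m ^ i).val r 1))
      = (∏ i ∈ T, (C ((m ^ i).val r 0) * X + C ((m ^ i).val r 1)))
        * (∏ i ∈ S, (C ((m ^ i).val r 0) * X + C ((m ^ i).val r 1))) := hsplit.symm
    _ = C (∏ i ∈ T, (m ^ i).val r 1)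
        * (C (∏ i ∈ S, (m ^ i).val r 0) * (X ^ q - X)) := by
          rw [hTprod, hSprod, hSroots]
    _ = C ((∏ i ∈ T, (m ^ i).val r 1) * (∏ i ∈ S, (m ^ i).val r 0)) * (X ^ q - X) := by
          rw [C_mul]; ring

end Aux

/-- If `s` has order exactly `q + 1` in `PGL(2,q)`, with `s^i = f_i/g_i` given by the rows of
`m^i`, then `g_1 ⋯ g_{q+1}` is a nonzero scalar multiple of `x^q - x`, and likewise for the
product of the numerators. -/
theorem stmt18 (Fq : Type*) [Field Fq] [Fintype Fq] (q : ℕ) (hq : Fintype.card Fq = q)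
    (m : GL (Fin 2) Fq) (hord : orderOf (toPGL Fq m) = q + 1) :
    (∃ u : Fq, u ≠ 0 ∧ ∏ i ∈ Finset.Icc 1 (q + 1),
        (C ((m ^ i).val 1 0) * X + C ((m ^ i).val 1 1)) = C u * (X ^ q - X)) ∧
    (∃ v : Fq, v ≠ 0 ∧ ∏ i ∈ Finset.Icc 1 (q + 1),
        (C ((m ^ i).val 0 0) * X + C ((m ^ i).val 0 1)) = C v * (X ^ q - X)) := by
  constructor
  · exact row_prod m hq hord 1 0 (by decide)
  · exact row_prod m hq hord 0 1 (by decide)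

end PaperPGL
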